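/- Let $a > 1$ and let $n \in \mathbb{N}_0$ with $n < a$. Write $w = -1 + re^{i\theta}$ with $0 < r < \delta < 1$ and $\theta \in (-\pi/2,\pi/2)$. Then $\int_0^1 \frac{t^n}{|1+w(1-t)|^{a+1}}\,dt \le C_{a,n}\, |1+w|^{n-a}$ where $C_{a,n} = \frac{5^{(a+1)/2}\,\Gamma(a-n)\Gamma(n+1)}{\Gamma(a+1)}$. -/

import Mathlib

/-!
On the segment, `1 + w (1 - t) = t + (1 - t) (1 + w)` with `Re (1 + w) ≥ 0` and `|1 + w| ≤ 1`, so
`|1 + w (1 - t)| ≥ (|1 + w| + t) / √5`, and with `ρ = |1 + w|` the integral is at most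
`5^((a+1)/2) ∫₀¹ tⁿ / (ρ + t)^(a+1) dt`. The substitution `u = t / (ρ + t)` turns the latter into
`ρ^(n-a)` times the incomplete Beta integral `∫₀^{1/(1+ρ)} uⁿ (1 - u)^(a-n-1) du`, which is at most
`B(n + 1, a - n) = Γ(n + 1) Γ(a - n) / Γ(a + 1)`.
-/

open MeasureTheory Set

lemma sq_add_sq_norm_le_sq_norm_ofReal_add {t : ℝ} (ht : 0 ≤ t) {z : ℂ} (hz : 0 ≤ z.re) :
    t ^ 2 + ‖z‖ ^ 2 ≤ ‖(t : ℂ) + z‖ ^ 2 := by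
  rw [Complex.sq_norm, Complex.sq_norm, Complex.normSq_add, Complex.normSq_ofReal,
    Complex.re_ofReal_mul, Complex.conj_re]
  nlinarith [mul_nonneg ht hz]

lemma add_div_sqrt_five_le_norm_one_add_mul_one_sub {w : ℂ} (hre : 0 ≤ (1 + w).re)
    (hle : ‖1 + w‖ ≤ 1) {t : ℝ} (ht₀ : 0 ≤ t) (ht₁ : t ≤ 1) :
    (‖1 + w‖ + t) / √5 ≤ ‖1 + w * (1 - t)‖ := by
  set z : ℂ := ((1 - t : ℝ) : ℂ) * (1 + w)
  have hz : 1 + w * (1 - t) = t + z := by simp only [z]; push_cast; ring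
  have hz_re : 0 ≤ z.re := by
    rw [Complex.re_ofReal_mul]; exact mul_nonneg (by linarith) hre
  have hz_norm : ‖z‖ = (1 - t) * ‖1 + w‖ := by
    rw [norm_mul, Complex.norm_real, Real.norm_of_nonneg (by linarith)]
  -- `‖1 + w‖ + t ≤ ‖z‖ + 2t`, then Cauchy–Schwarz with weights `(1, 2)`
  have hsq : (‖1 + w‖ + t) ^ 2 ≤ 5 * ‖1 + w * (1 - t)‖ ^ 2 := by
    have := sq_add_sq_norm_le_sq_norm_ofReal_add ht₀ hz_re
    rw [hz]
    nlinarith [sq_nonneg (2 * ‖z‖ - t), mul_le_mul_of_nonneg_left hle ht₀, norm_nonneg (1 + w)]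
  rw [div_le_iff₀ (by positivity)]
  calc ‖1 + w‖ + t = √((‖1 + w‖ + t) ^ 2) := (Real.sqrt_sq (by positivity)).symm
    _ ≤ √(5 * ‖1 + w * (1 - t)‖ ^ 2) := Real.sqrt_le_sqrt hsq
    _ = ‖1 + w * (1 - t)‖ * √5 := by
      rw [Real.sqrt_mul (by norm_num), Real.sqrt_sq (norm_nonneg _), mul_comm]

lemma intervalIntegrable_pow_div_add_rpow (n : ℕ) {ρ s : ℝ} (hρ : 0 < ρ) :
    IntervalIntegrable (fun t : ℝ => t ^ n / (ρ + t) ^ s) volume 0 1 := by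
  refine ContinuousOn.intervalIntegrable fun t ht => ?_
  rw [uIcc_of_le zero_le_one] at ht
  have : 0 < ρ + t := by linarith [ht.1]
  exact ((continuousAt_id.pow n).div ((continuousAt_const.add continuousAt_id).rpow_const
    (Or.inl this.ne')) (Real.rpow_pos_of_pos this s).ne').continuousWithinAt

lemma integral_pow_div_norm_one_add_mul_rpow_le {w : ℂ} (hre : 0 ≤ (1 + w).re)
    (hpos : 0 < ‖1 + w‖) (hle : ‖1 + w‖ ≤ 1) (n : ℕ) {s : ℝ} (hs : 0 ≤ s) :
    ∫ t in (0 : ℝ)..1, t ^ n / ‖1 + w * (1 - (t : ℂ))‖ ^ s ≤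
      5 ^ (s / 2) * ∫ t in (0 : ℝ)..1, t ^ n / (‖1 + w‖ + t) ^ s := by
  have h5 : (5 : ℝ) ^ (s / 2) = √5 ^ s := by
    rw [Real.sqrt_eq_rpow, ← Real.rpow_mul (by norm_num)]; ring_nf
  rw [h5, ← intervalIntegral.integral_const_mul, intervalIntegral.integral_of_le zero_le_one,
    intervalIntegral.integral_of_le zero_le_one]
  refine integral_mono_of_nonneg ?_ ?_ ?_
  · filter_upwards [ae_restrict_mem measurableSet_Ioc] with t ht
    exact div_nonneg (pow_nonneg ht.1.le n) (Real.rpow_nonneg (norm_nonneg _) s)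
  · exact ((intervalIntegrable_pow_div_add_rpow n hpos).const_mul _).1
  · filter_upwards [ae_restrict_mem measurableSet_Ioc] with t ht
    have hsum : 0 < ‖1 + w‖ + t := by linarith [ht.1]
    calc t ^ n / ‖1 + w * (1 - (t : ℂ))‖ ^ s ≤ t ^ n / ((‖1 + w‖ + t) / √5) ^ s := by
          gcongr
          · exact pow_nonneg ht.1.le n
          · exact add_div_sqrt_five_le_norm_one_add_mul_one_sub hre hle ht.1.le ht.2
      _ = √5 ^ s * (t ^ n / (‖1 + w‖ + t) ^ s) := by
          rw [Real.div_rpow hsum.le (Real.sqrt_nonneg 5)]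
          field_simp

lemma intervalIntegrable_pow_mul_one_sub_rpow (n : ℕ) {b : ℝ} (hb : 0 < b) :
    IntervalIntegrable (fun u : ℝ => u ^ n * (1 - u) ^ (b - 1)) volume 0 1 := by
  have h : IntervalIntegrable (fun u : ℝ => (1 - u) ^ (b - 1)) volume (1 - 1) (1 - 0) :=
    (intervalIntegral.intervalIntegrable_rpow' (by linarith)).comp_sub_left 1
  rw [sub_self, sub_zero] at h
  exact h.continuousOn_mul (by fun_prop)

lemma integral_pow_mul_one_sub_rpow_eq_beta (n : ℕ) {b : ℝ} (hb : 0 < b) :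
    ∫ u in (0 : ℝ)..1, u ^ n * (1 - u) ^ (b - 1) = ProbabilityTheory.beta (n + 1) b := by
  rw [ProbabilityTheory.beta_eq_betaIntegralReal _ _ (by positivity) hb, Complex.betaIntegral,
    ← Complex.ofReal_re (∫ u in (0 : ℝ)..1, u ^ n * (1 - u) ^ (b - 1)),
    ← intervalIntegral.integral_ofReal]
  congr 1
  refine intervalIntegral.integral_congr fun u hu => ?_
  rw [uIcc_of_le zero_le_one] at hu
  push_cast
  rw [add_sub_cancel_right, Complex.cpow_natCast, Complex.ofReal_cpow (by linarith [hu.2])]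
  norm_cast

-- The substitution `u = t / (ρ + t)`, `du = ρ / (ρ + t) ^ 2 dt`, which maps `[0, 1]` onto
-- `[0, 1 / (ρ + 1)]`.
lemma pow_div_add_rpow_eq (n : ℕ) (a : ℝ) {ρ t : ℝ} (hρ : 0 < ρ) (ht : 0 ≤ t) :
    t ^ n / (ρ + t) ^ (a + 1) = ρ ^ ((n : ℝ) - a) *
      ((t / (ρ + t)) ^ n * (1 - t / (ρ + t)) ^ (a - n - 1) * (ρ / (ρ + t) ^ 2)) := by
  have hs : 0 < ρ + t := by linarith
  have h1 : 1 - t / (ρ + t) = ρ / (ρ + t) := by field_simp; ring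
  have hρ' : ρ ^ ((n : ℝ) - a) * ρ ^ (a - n - 1) * ρ = 1 := by
    rw [← Real.rpow_add hρ, ← Real.rpow_add_one hρ.ne',
      show (n : ℝ) - a + (a - n - 1) + 1 = 0 by ring, Real.rpow_zero]
  have hs' : (ρ + t) ^ (a + 1) = (ρ + t) ^ n * (ρ + t) ^ (a - n - 1) * (ρ + t) ^ 2 := by
    rw [← Real.rpow_natCast, ← Real.rpow_add hs, ← Real.rpow_two, ← Real.rpow_add hs]; ring_nf
  rw [h1, Real.div_rpow hρ.le hs.le, hs', div_pow]
  field_simp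
  linear_combination -t ^ n * hρ'

lemma integral_pow_div_add_rpow_eq (n : ℕ) (a : ℝ) {ρ : ℝ} (hρ : 0 < ρ) :
    ∫ t in (0 : ℝ)..1, t ^ n / (ρ + t) ^ (a + 1) =
      ρ ^ ((n : ℝ) - a) * ∫ u in (0 : ℝ)..1 / (ρ + 1), u ^ n * (1 - u) ^ (a - n - 1) := by
  have hderiv : ∀ t ∈ uIcc (0 : ℝ) 1, HasDerivAt (fun t => t / (ρ + t)) (ρ / (ρ + t) ^ 2) t := by
    intro t ht
    rw [uIcc_of_le zero_le_one] at ht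
    refine ((hasDerivAt_id' t).div ((hasDerivAt_id' t).const_add ρ) ?_).congr_deriv ?_
    · linarith [ht.1]
    · ring
  have hcont : ContinuousOn (fun t => ρ / (ρ + t) ^ 2) (uIcc (0 : ℝ) 1) := by
    rw [uIcc_of_le zero_le_one]
    exact continuousOn_const.div (by fun_prop) fun t ht => by have := ht.1; positivity
  have hmaps : (fun t => t / (ρ + t)) '' uIcc (0 : ℝ) 1 ⊆ Iio 1 := by
    rintro _ ⟨t, ht, rfl⟩
    rw [uIcc_of_le zero_le_one] at ht
    show t / (ρ + t) < 1
    exact (div_lt_one (by linarith [ht.1])).2 (by linarith)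
  have hG : ContinuousOn (fun u : ℝ => u ^ n * (1 - u) ^ (a - n - 1)) (Iio 1) :=
    (continuous_pow n).continuousOn.mul fun u hu =>
      ((continuousAt_const.sub continuousAt_id).rpow_const
        (Or.inl (sub_ne_zero.2 (ne_of_lt hu).symm))).continuousWithinAt
  have hsubst := intervalIntegral.integral_comp_mul_deriv' hderiv hcont (hG.mono hmaps)
  simp only [zero_div, add_zero] at hsubst
  rw [← hsubst, ← intervalIntegral.integral_const_mul]
  refine intervalIntegral.integral_congr fun t ht => ?_
  rw [uIcc_of_le zero_le_one] at ht
  exact pow_div_add_rpow_eq n a hρ ht.1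

lemma integral_pow_div_add_rpow_le (n : ℕ) {a ρ : ℝ} (hn : (n : ℝ) < a) (hρ : 0 < ρ) :
    ∫ t in (0 : ℝ)..1, t ^ n / (ρ + t) ^ (a + 1) ≤
      ρ ^ ((n : ℝ) - a) * ProbabilityTheory.beta (n + 1) (a - n) := by
  have hb : 0 < a - n := sub_pos.2 hn
  rw [integral_pow_div_add_rpow_eq n a hρ, ← integral_pow_mul_one_sub_rpow_eq_beta n hb]
  refine mul_le_mul_of_nonneg_left (intervalIntegral.integral_mono_interval le_rfl
    (by positivity) ((div_le_one (by linarith)).2 (by linarith)) ?_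
    (intervalIntegrable_pow_mul_one_sub_rpow n hb)) (Real.rpow_nonneg hρ.le _)
  filter_upwards [ae_restrict_mem measurableSet_Ioc] with u hu
  exact mul_nonneg (pow_nonneg hu.1.le n) (Real.rpow_nonneg (by linarith [hu.2]) _)

theorem stmt_9_general (a δ r θ : ℝ) (n : ℕ) (hn : (n : ℝ) < a)
    (hr : 0 < r) (hrδ : r < δ) (hδ : δ < 1)
    (hθ : θ ∈ Set.Ioo (-(Real.pi / 2)) (Real.pi / 2))
    (w : ℂ) (hw : w = -1 + (r : ℂ) * Complex.exp (θ * Complex.I)) :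
    ∫ t in (0 : ℝ)..1, t ^ n / ‖1 + w * (1 - (t : ℂ))‖ ^ (a + 1) ≤
      (5 ^ ((a + 1) / 2) * Real.Gamma (a - n) * Real.Gamma (n + 1) / Real.Gamma (a + 1)) *
        ‖1 + w‖ ^ ((n : ℝ) - a) := by
  have hnorm : ‖1 + w‖ = r := by
    rw [hw, add_neg_cancel_left, norm_mul, Complex.norm_real, Complex.norm_exp_ofReal_mul_I,
      mul_one, Real.norm_of_nonneg hr.le]
  have hre : 0 ≤ (1 + w).re := by
    rw [hw, add_neg_cancel_left, Complex.re_ofReal_mul, Complex.exp_ofReal_mul_I_re]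
    exact mul_nonneg hr.le (Real.cos_nonneg_of_mem_Icc (Ioo_subset_Icc_self hθ))
  have hpos : 0 < ‖1 + w‖ := hnorm ▸ hr
  calc _ ≤ 5 ^ ((a + 1) / 2) * ∫ t in (0 : ℝ)..1, t ^ n / (‖1 + w‖ + t) ^ (a + 1) :=
        integral_pow_div_norm_one_add_mul_rpow_le hre hpos (by linarith) n
          (by linarith [(Nat.cast_nonneg n : (0 : ℝ) ≤ n)])
    _ ≤ 5 ^ ((a + 1) / 2) * (‖1 + w‖ ^ ((n : ℝ) - a) * ProbabilityTheory.beta (n + 1) (a - n)) := by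
        gcongr
        exact integral_pow_div_add_rpow_le n hn hpos
    _ = _ := by
        rw [ProbabilityTheory.beta, show (n : ℝ) + 1 + (a - n) = a + 1 by ring]
        ring

theorem stmt_9 (a δ r θ : ℝ) (n : ℕ) (ha : a > 1) (hn : (n : ℝ) < a)
    (hr : 0 < r) (hrδ : r < δ) (hδ : δ < 1)
    (hθ : θ ∈ Set.Ioo (-(Real.pi / 2)) (Real.pi / 2))
    (w : ℂ) (hw : w = -1 + (r : ℂ) * Complex.exp (θ * Complex.I)) :
    ∫ t in (0 : ℝ)..1, t ^ n / ‖1 + w * (1 - (t : ℂ))‖ ^ (a + 1) ≤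
      (5 ^ ((a + 1) / 2) * Real.Gamma (a - n) * Real.Gamma (n + 1) / Real.Gamma (a + 1)) *
        ‖1 + w‖ ^ ((n : ℝ) - a) :=
  stmt_9_general a δ r θ n hn hr hrδ hδ hθ w hw
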